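/- The restricted dynamics satisfies the induced dynamical system: ψ_0 = 0 and, for every n ≥ 0, ψ_{n+1} = E_PON ψ_n + ρ, where ψ_n = χΨ_n, E_PON = χUχ*, and ρ = χUΨ_0. -/

import Mathlib

open scoped BigOperators

/-- A symmetric directed graph: arcs with origin/terminus maps and an
inversion involution; every vertex has a finite nonempty set of outgoing
arcs; the graph is connected. -/
structure SymDigraph where
  V : Type
  A : Type
  o : A → V
  t : A → V
  bar : A → A
  bar_inv : Function.Involutive bar
  o_bar : ∀ a, o (bar a) = t a
  t_bar : ∀ a, t (bar a) = o a
  out_fin : ∀ u : V, {a : A | o a = u}.Finite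
  out_ne : ∀ u : V, {a : A | o a = u}.Nonempty
  connected : ∀ u v : V, Relation.ReflTransGen (fun x y => ∃ a, o a = x ∧ t a = y) u v

/-- `p` is a transition function of a random walk: `0 < p a ≤ 1` and the
outgoing probabilities at every vertex sum to `1`. -/
def IsTransition (G : SymDigraph) (p : G.A → ℝ) : Prop :=
  (∀ a, 0 < p a ∧ p a ≤ 1) ∧
  ∀ u : G.V, ∑ᶠ a ∈ {a : G.A | G.o a = u}, p a = 1

/-- The Szegedy evolution:
`(UΨ)(a) = 2√(p a) Σ_{b : t b = o a} √(p b̄) Ψ(b) − Ψ(ā)`. -/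
noncomputable def szegedy (G : SymDigraph) (p : G.A → ℝ) (Ψ : G.A → ℂ) : G.A → ℂ :=
  fun a =>
    2 * (Real.sqrt (p a) : ℂ) *
        (∑ᶠ b ∈ {b : G.A | G.t b = G.o a}, (Real.sqrt (p (G.bar b)) : ℂ) * Ψ b)
      - Ψ (G.bar a)

/-- `ρ_V(u) = Σ_{b : t b = u} √(p b̄) Ψ(b)`. -/
noncomputable def rhoV (G : SymDigraph) (p : G.A → ℝ) (Ψ : G.A → ℂ) (u : G.V) : ℂ :=
  ∑ᶠ b ∈ {b : G.A | G.t b = u}, (Real.sqrt (p (G.bar b)) : ℂ) * Ψ b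

/-- `ρ_E(|a|) = (Ψ(a) + Ψ(ā))/2`. -/
noncomputable def rhoE (G : SymDigraph) (Ψ : G.A → ℂ) (a : G.A) : ℂ :=
  (Ψ a + Ψ (G.bar a)) / 2

/-- Reversibility of `p` with reversible measure `m_V`; the detailed balance
condition `p(a) m_V(o a) = p(ā) m_V(t a)`. -/
def IsReversible (G : SymDigraph) (p : G.A → ℝ) (mV : G.V → ℝ) : Prop :=
  (∀ u, 0 < mV u) ∧ ∀ a, p a * mV (G.o a) = p (G.bar a) * mV (G.t a)

/-- The edge measure `m_E(|a|) = p(a) m_V(o a)`. -/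
def mEdge (G : SymDigraph) (p : G.A → ℝ) (mV : G.V → ℝ) (a : G.A) : ℝ :=
  p a * mV (G.o a)

/-- The tailed graph `G̃`: a finite internal graph `G0 = (V0, A0)` together
with `r ≥ 1` semi-infinite tails.  Tail `j` has vertices `tailV j 0,
tailV j 1, …` (with root `tailV j 0 = o(P_j) ∈ V0`, all other tail vertices
outside `V0`) and inward arcs `tailA j k` going from `tailV j (k+1)` to
`tailV j k`; `e_j = tailA j 0`.  Outward arcs are the `bar (tailA j k)`. -/
structure TailedGraph extends SymDigraph where
  r : ℕ
  r_pos : 0 < r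
  V0 : Set V
  A0 : Set A
  V0_fin : V0.Finite
  A0_fin : A0.Finite
  A0_bar : ∀ a ∈ A0, bar a ∈ A0
  A0_ends : ∀ a ∈ A0, o a ∈ V0 ∧ t a ∈ V0
  tailV : Fin r → ℕ → V
  tailA : Fin r → ℕ → A
  tailA_o : ∀ j k, o (tailA j k) = tailV j (k + 1)
  tailA_t : ∀ j k, t (tailA j k) = tailV j k
  tailV_root : ∀ j, tailV j 0 ∈ V0
  tailV_notin : ∀ j k, tailV j (k + 1) ∉ V0
  tailV_inj : ∀ j k j' k', tailV j (k + 1) = tailV j' (k' + 1) → j = j' ∧ k = k'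
  tailA_nin : ∀ j k, tailA j k ∉ A0
  arcs_cover : ∀ a : A, a ∈ A0 ∨ ∃ j k, a = tailA j k ∨ a = bar (tailA j k)
  verts_cover : ∀ u : V, u ∈ V0 ∨ ∃ j k, u = tailV j (k + 1)

/-- A transition function on the tailed graph: additionally `p = 1/2` on all
tail arcs except possibly the arcs leaving `o(P_j)` into tail `j`
(that is, except the `bar (tailA j 0)`). -/
def TailTransition (G : TailedGraph) (p : G.A → ℝ) : Prop :=
  IsTransition G.toSymDigraph p ∧
  (∀ j k, p (G.tailA j k) = 1 / 2) ∧
  ∀ j k, p (G.bar (G.tailA j (k + 1))) = 1 / 2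

/-- `Ψ` is a stationary state with boundary data `α β : ℂ^r`:
`UΨ = Ψ`, `Ψ = α_j` on the inward arcs of tail `j` and `Ψ = β_j` on the
outward arcs of tail `j`. -/
def IsStationaryState (G : TailedGraph) (p : G.A → ℝ) (Ψ : G.A → ℂ)
    (α β : Fin G.r → ℂ) : Prop :=
  szegedy G.toSymDigraph p Ψ = Ψ ∧
  (∀ j k, Ψ (G.tailA j k) = α j) ∧
  ∀ j k, Ψ (G.bar (G.tailA j k)) = β j

/-- `m(δG0) = Σ_{j=1}^r m_E(|e_j|)`. -/
def mDelta (G : TailedGraph) (p : G.A → ℝ) (mV : G.V → ℝ) : ℝ :=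
  ∑ j : Fin G.r, mEdge G.toSymDigraph p mV (G.tailA j 0)

/-- `⟨m_{δE}, α⟩ = Σ_{j=1}^r √(m_E(|e_j|)/m(δG0)) · α_j`. -/
noncomputable def bdryInner (G : TailedGraph) (p : G.A → ℝ) (mV : G.V → ℝ)
    (α : Fin G.r → ℂ) : ℂ :=
  ∑ j : Fin G.r,
    (Real.sqrt (mEdge G.toSymDigraph p mV (G.tailA j 0) / mDelta G p mV) : ℂ) * α j

/-- The current
`j(a) = √(m_E(|a|)) Ψ(a) − (m_E(|a|)/√(m(δG0))) ⟨m_{δE}, α⟩`. -/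
noncomputable def current (G : TailedGraph) (p : G.A → ℝ) (mV : G.V → ℝ)
    (α : Fin G.r → ℂ) (Ψ : G.A → ℂ) (a : G.A) : ℂ :=
  (Real.sqrt (mEdge G.toSymDigraph p mV a) : ℂ) * Ψ a
    - ((mEdge G.toSymDigraph p mV a : ℝ) : ℂ)
        / (Real.sqrt (mDelta G p mV) : ℂ) * bdryInner G p mV α

/-- A cycle `(a_1, …, a_s)`: consecutive arcs concatenate (cyclically) and
the `2s` arcs `a_1, …, a_s, ā_1, …, ā_s` are pairwise distinct. -/
def IsCycle (G : SymDigraph) (s : ℕ) (c : Fin s → G.A) : Prop :=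
  0 < s ∧
  (∀ k : Fin s, G.t (c k) = G.o (c ⟨(k.val + 1) % s, Nat.mod_lt _ k.pos⟩)) ∧
  Function.Injective (Sum.elim c fun k => G.bar (c k))

open Classical in
/-- The cycle vector `w_c`: `1/√(m_E(|a_k|))` at `a_k`, `−1/√(m_E(|a_k|))`
at `ā_k`, and `0` elsewhere. -/
noncomputable def cycleVec (G : SymDigraph) (mE : G.A → ℝ) {s : ℕ}
    (c : Fin s → G.A) (a : G.A) : ℂ :=
  if ∃ k, a = c k then ((1 / Real.sqrt (mE a) : ℝ) : ℂ)
  else if ∃ k, a = G.bar (c k) then ((-(1 / Real.sqrt (mE a)) : ℝ) : ℂ)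
  else 0


/-- The restriction operator `χ` from functions on `Ã` to functions on `A0`. -/
def chi (G : TailedGraph) (Ψ : G.A → ℂ) : {a : G.A // a ∈ G.A0} → ℂ :=
  fun a => Ψ a.1

open Classical in
/-- The extension-by-zero operator `χ*` from functions on `A0` to functions on `Ã`. -/
noncomputable def chiStar (G : TailedGraph) (ψ : {a : G.A // a ∈ G.A0} → ℂ) : G.A → ℂ :=
  fun a => if h : a ∈ G.A0 then ψ ⟨a, h⟩ else 0

/-- `E_PON = χ U χ*`. -/
noncomputable def EPON (G : TailedGraph) (p : G.A → ℝ)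
    (ψ : {a : G.A // a ∈ G.A0} → ℂ) : {a : G.A // a ∈ G.A0} → ℂ :=
  chi G (szegedy G.toSymDigraph p (chiStar G ψ))

/-- The set of arcs with given terminus is finite. -/
lemma in_fin (G : SymDigraph) (u : G.V) : {b : G.A | G.t b = u}.Finite := by
  apply Set.Finite.subset ((G.out_fin u).image G.bar)
  intro b hb
  exact ⟨G.bar b, by simpa [G.o_bar] using hb, G.bar_inv b⟩

/-- Classification of arcs ending at a vertex of `V0`. -/
lemma end_in_V0 (G : TailedGraph) {b : G.A} {u : G.V} (hu : u ∈ G.V0)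
    (hb : G.t b = u) : b ∈ G.A0 ∨ ∃ j, b = G.tailA j 0 := by
  rcases G.arcs_cover b with h | ⟨j, k, h | h⟩
  · exact Or.inl h
  · subst h
    cases k with
    | zero => exact Or.inr ⟨j, rfl⟩
    | succ m =>
      exfalso
      exact G.tailV_notin j m (by rw [← G.tailA_t j (m+1), hb]; exact hu)
  · exfalso
    subst h
    rw [G.t_bar, G.tailA_o] at hb
    exact G.tailV_notin j k (hb ▸ hu)

/-- Arcs ending at an interior tail vertex. -/
lemma end_in_tail (G : TailedGraph) (j : Fin G.r) (k : ℕ) :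
    {b : G.A | G.t b = G.tailV j (k + 1)}
      = {G.tailA j (k + 1), G.bar (G.tailA j k)} := by
  ext b
  simp only [Set.mem_setOf_eq, Set.mem_insert_iff, Set.mem_singleton_iff]
  constructor
  · intro hb
    rcases G.arcs_cover b with h | ⟨j', k', h | h⟩
    · exact absurd (G.A0_ends b h).2 (by rw [hb]; exact G.tailV_notin j k)
    · subst h
      rw [G.tailA_t] at hb
      cases k' with
      | zero => exact absurd (G.tailV_root j') (by rw [hb]; exact G.tailV_notin j k)
      | succ m =>
        obtain ⟨rfl, rfl⟩ := G.tailV_inj j' m j k hb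
        exact Or.inl rfl
    · subst h
      rw [G.t_bar, G.tailA_o] at hb
      obtain ⟨rfl, rfl⟩ := G.tailV_inj j' k' j k hb
      exact Or.inr rfl
  · rintro (rfl | rfl)
    · exact G.tailA_t j (k + 1)
    · rw [G.t_bar, G.tailA_o]

lemma tail_ne (G : TailedGraph) (j : Fin G.r) (k : ℕ) :
    G.tailA j (k + 1) ≠ G.bar (G.tailA j k) := by
  intro h
  have ho : G.tailV j (k + 2) = G.tailV j k := by
    have := congrArg G.o h
    rwa [G.tailA_o, G.o_bar, G.tailA_t] at this
  cases k with
  | zero => exact G.tailV_notin j 1 (ho ▸ G.tailV_root j)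
  | succ m =>
    obtain ⟨-, hk⟩ := G.tailV_inj j (m + 2) j m ho
    omega

/-- One step of the walk shifts inward tail values. -/
lemma tail_shift (G : TailedGraph) (p : G.A → ℝ) (hp : TailTransition G p)
    (Φ : G.A → ℂ) (j : Fin G.r) (k : ℕ) :
    szegedy G.toSymDigraph p Φ (G.tailA j k) = Φ (G.tailA j (k + 1)) := by
  have hbar : G.bar (G.bar (G.tailA j k)) = G.tailA j k := G.bar_inv _
  rw [szegedy, G.tailA_o, end_in_tail G j k,
    finsum_mem_pair (tail_ne G j k), hbar, hp.2.1 j k, hp.2.2 j k]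
  have h2 : (Real.sqrt (1 / 2) : ℂ) * (Real.sqrt (1 / 2) : ℂ) = 1 / 2 := by
    rw [← Complex.ofReal_mul, Real.mul_self_sqrt (by norm_num)]
    norm_num
  set x := Φ (G.tailA j (k + 1))
  set y := Φ (G.bar (G.tailA j k))
  have : (2 : ℂ) * (Real.sqrt (1 / 2) : ℂ)
      * ((Real.sqrt (1 / 2) : ℂ) * x + (Real.sqrt (1 / 2) : ℂ) * y) - y
      = 2 * ((Real.sqrt (1/2) : ℂ) * (Real.sqrt (1/2) : ℂ)) * (x + y) - y := by
    ring
  rw [this, h2]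
  ring

/-- Values on inward tail arcs stay `α j` along the evolution. -/
lemma tail_const (G : TailedGraph) (p : G.A → ℝ) (hp : TailTransition G p)
    (α : Fin G.r → ℂ) (Ψ : ℕ → G.A → ℂ)
    (h0in : ∀ j k, Ψ 0 (G.tailA j k) = α j)
    (hstep : ∀ n, Ψ (n + 1) = szegedy G.toSymDigraph p (Ψ n)) :
    ∀ n j k, Ψ n (G.tailA j k) = α j := by
  intro n
  induction n with
  | zero => exact h0in
  | succ m ih =>
    intro j k
    rw [hstep m, tail_shift G p hp (Ψ m) j k]
    exact ih j (k + 1)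


/-- the induced dynamical system `ψ_0 = 0`,
`ψ_{n+1} = E_PON ψ_n + ρ` with `ψ_n = χ Ψ_n` and `ρ = χ U Ψ_0`. -/
theorem induced_dynamical_system (G : TailedGraph) (p : G.A → ℝ)
    (hp : TailTransition G p)
    (α : Fin G.r → ℂ) (Ψ : ℕ → G.A → ℂ)
    (h0in : ∀ j k, Ψ 0 (G.tailA j k) = α j)
    (h0out : ∀ a : G.A, (∀ j k, a ≠ G.tailA j k) → Ψ 0 a = 0)
    (hstep : ∀ n, Ψ (n + 1) = szegedy G.toSymDigraph p (Ψ n)) :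
    chi G (Ψ 0) = 0 ∧
      ∀ n : ℕ, chi G (Ψ (n + 1))
        = EPON G p (chi G (Ψ n)) + chi G (szegedy G.toSymDigraph p (Ψ 0)) := by
  constructor
  · funext a
    exact h0out a.1 (fun j k h => G.tailA_nin j k (h ▸ a.2))
  · intro n
    funext a
    obtain ⟨a, ha⟩ := a
    have hoa : G.o a ∈ G.V0 := (G.A0_ends a ha).1
    have hbar : G.bar a ∈ G.A0 := G.A0_bar a ha
    have hfin : {b : G.A | G.t b = G.o a}.Finite := in_fin G.toSymDigraph (G.o a)
    -- pointwise decomposition of the summand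
    have hpt : ∀ b ∈ {b : G.A | G.t b = G.o a},
        (Real.sqrt (p (G.bar b)) : ℂ) * Ψ n b
          = (Real.sqrt (p (G.bar b)) : ℂ) * chiStar G (chi G (Ψ n)) b
            + (Real.sqrt (p (G.bar b)) : ℂ) * Ψ 0 b := by
      intro b hb
      rcases end_in_V0 G hoa hb with hbA | ⟨j, rfl⟩
      · rw [chiStar, dif_pos hbA, chi,
          h0out b (fun j k h => G.tailA_nin j k (h ▸ hbA))]
        ring
      · rw [chiStar, dif_neg (G.tailA_nin j 0),
          tail_const G p hp α Ψ h0in hstep n j 0, h0in j 0]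
        ring
    have hsum : (∑ᶠ b ∈ {b : G.A | G.t b = G.o a},
          (Real.sqrt (p (G.bar b)) : ℂ) * Ψ n b)
        = (∑ᶠ b ∈ {b : G.A | G.t b = G.o a},
            (Real.sqrt (p (G.bar b)) : ℂ) * chiStar G (chi G (Ψ n)) b)
          + ∑ᶠ b ∈ {b : G.A | G.t b = G.o a},
              (Real.sqrt (p (G.bar b)) : ℂ) * Ψ 0 b := by
      rw [← finsum_mem_add_distrib hfin]
      exact finsum_mem_congr rfl hpt
    have hchibar : chiStar G (chi G (Ψ n)) (G.bar a) = Ψ n (G.bar a) := by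
      rw [chiStar, dif_pos hbar]; rfl
    have h0bar : Ψ 0 (G.bar a) = 0 :=
      h0out _ (fun j k h => G.tailA_nin j k (h ▸ hbar))
    show Ψ (n + 1) a = szegedy G.toSymDigraph p (chiStar G (chi G (Ψ n))) a
          + szegedy G.toSymDigraph p (Ψ 0) a
    rw [hstep n]
    simp only [szegedy]
    rw [hsum, hchibar, h0bar]
    ring
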